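/- arXiv:math/0502561 — 8 statements merged into one kernel-verified Lean document; each statement's English description precedes it below -/
import Mathlib

section
/- If A is a simple algebra (A·A ≠ 0 and the only ideals of A are 0 and A), then the centroid C(A) is a field. -/
/-!
Kernels and images of centroidal maps are ideals, so in a simple algebra every nonzero element of
the centroid is bijective, and its inverse is again centroidal. Commutativity holds on products:
`χ (ψ (a * b)) = χ a * ψ b = ψ (χ (a * b))`, and products span `A` because they span a nonzero ideal.
-/

/-- A two-sided ideal of a (not necessarily associative) algebra. -/
def IsAlgIdeal (K A : Type*) [CommRing K] [NonUnitalNonAssocRing A] [Module K A]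
    (I : Submodule K A) : Prop :=
  ∀ (a : A), ∀ x ∈ I, a * x ∈ I ∧ x * a ∈ I

/-- A centroidal transformation. -/
def IsCentroidal (K A : Type*) [CommRing K] [NonUnitalNonAssocRing A] [Module K A]
    (χ : Module.End K A) : Prop :=
  ∀ a b : A, χ (a * b) = a * χ b ∧ χ (a * b) = χ a * b

section

variable {K A : Type*} [CommRing K] [NonUnitalNonAssocRing A] [Module K A]

lemma isAlgIdeal_span_mul :
    IsAlgIdeal K A (Submodule.span K {x | ∃ a b : A, a * b = x}) :=
  fun a x _ => ⟨Submodule.subset_span ⟨a, x, rfl⟩, Submodule.subset_span ⟨x, a, rfl⟩⟩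

lemma span_mul_eq_top_of_simple (hAA : ∃ a b : A, a * b ≠ 0)
    (hsimple : ∀ I : Submodule K A, IsAlgIdeal K A I → I = ⊥ ∨ I = ⊤) :
    Submodule.span K {x | ∃ a b : A, a * b = x} = ⊤ := by
  obtain ⟨a, b, hab⟩ := hAA
  refine (hsimple _ isAlgIdeal_span_mul).resolve_left fun h => hab ?_
  have hmem : a * b ∈ Submodule.span K {x | ∃ a b : A, a * b = x} :=
    Submodule.subset_span ⟨a, b, rfl⟩
  rwa [h, Submodule.mem_bot] at hmem

namespace IsCentroidal

variable {χ ψ : Module.End K A}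

lemma commute_of_span_mul_eq_top
    (hspan : Submodule.span K {x | ∃ a b : A, a * b = x} = ⊤)
    (hχ : IsCentroidal K A χ) (hψ : IsCentroidal K A ψ) : χ * ψ = ψ * χ := by
  refine LinearMap.ext_on hspan ?_
  rintro _ ⟨a, b, rfl⟩
  change χ (ψ (a * b)) = ψ (χ (a * b))
  rw [(hψ a b).1, (hχ a (ψ b)).2, (hχ a b).2, (hψ (χ a) b).1]

lemma isAlgIdeal_ker (hχ : IsCentroidal K A χ) : IsAlgIdeal K A (LinearMap.ker χ) := by
  intro a x hx
  rw [LinearMap.mem_ker] at hx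
  simp only [LinearMap.mem_ker, (hχ a x).1, (hχ x a).2, hx, mul_zero, zero_mul, and_self]

lemma isAlgIdeal_range (hχ : IsCentroidal K A χ) : IsAlgIdeal K A (LinearMap.range χ) := by
  rintro a _ ⟨y, rfl⟩
  exact ⟨⟨a * y, (hχ a y).1⟩, ⟨y * a, (hχ y a).2⟩⟩

lemma bijective_of_simple
    (hsimple : ∀ I : Submodule K A, IsAlgIdeal K A I → I = ⊥ ∨ I = ⊤)
    (hχ : IsCentroidal K A χ) (hχ0 : χ ≠ 0) : Function.Bijective χ := by
  constructor
  · rw [← LinearMap.ker_eq_bot]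
    exact (hsimple _ hχ.isAlgIdeal_ker).resolve_right fun h => hχ0 (LinearMap.ker_eq_top.mp h)
  · rw [← LinearMap.range_eq_top]
    exact (hsimple _ hχ.isAlgIdeal_range).resolve_left fun h => hχ0 (LinearMap.range_eq_bot.mp h)

lemma symm {e : A ≃ₗ[K] A} (he : IsCentroidal K A e.toLinearMap) :
    IsCentroidal K A e.symm.toLinearMap := by
  intro a b
  constructor <;> apply e.injective
  · simpa using ((he a (e.symm b)).1).symm
  · simpa using ((he (e.symm a) b).2).symm

end IsCentroidal

end

theorem centroid_isField_of_simple_general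
    (K A : Type*) [CommRing K] [NonUnitalNonAssocRing A] [Module K A]
    (hAA : ∃ a b : A, a * b ≠ 0)
    (hsimple : ∀ I : Submodule K A, IsAlgIdeal K A I → I = ⊥ ∨ I = ⊤) :
    ((1 : Module.End K A) ≠ 0) ∧
    (∀ χ ψ : Module.End K A, IsCentroidal K A χ → IsCentroidal K A ψ → χ * ψ = ψ * χ) ∧
    (∀ χ : Module.End K A, IsCentroidal K A χ → χ ≠ 0 →
      ∃ ψ : Module.End K A, IsCentroidal K A ψ ∧ χ * ψ = 1 ∧ ψ * χ = 1) := by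
  have : Nontrivial A := by
    obtain ⟨a, b, hab⟩ := hAA
    exact nontrivial_of_ne _ _ hab
  refine ⟨one_ne_zero, fun χ ψ hχ hψ =>
    hχ.commute_of_span_mul_eq_top (span_mul_eq_top_of_simple hAA hsimple) hψ, ?_⟩
  intro χ hχ hχ0
  let e := LinearEquiv.ofBijective χ (hχ.bijective_of_simple hsimple hχ0)
  refine ⟨e.symm.toLinearMap, IsCentroidal.symm hχ, ?_, ?_⟩
  · exact LinearMap.ext e.apply_symm_apply
  · exact LinearMap.ext e.symm_apply_apply

/-- If `A` is a simple algebra (`A·A ≠ 0` and the only ideals are `0` and `A`),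
then its centroid is a field: a nontrivial commutative ring in which every
nonzero element is invertible. -/
theorem centroid_isField_of_simple
    (K A : Type*) [CommRing K] [NonUnitalNonAssocRing A] [Module K A]
    [SMulCommClass K A A] [IsScalarTower K A A]
    (hAA : ∃ a b : A, a * b ≠ 0)
    (hsimple : ∀ I : Submodule K A, IsAlgIdeal K A I → I = ⊥ ∨ I = ⊤) :
    ((1 : Module.End K A) ≠ 0) ∧
    (∀ χ ψ : Module.End K A, IsCentroidal K A χ → IsCentroidal K A ψ → χ * ψ = ψ * χ) ∧
    (∀ χ : Module.End K A, IsCentroidal K A χ → χ ≠ 0 →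
      ∃ ψ : Module.End K A, IsCentroidal K A ψ ∧ χ * ψ = 1 ∧ ψ * χ = 1) :=
  centroid_isField_of_simple_general K A hAA hsimple
end

section
/- For an algebra A, the intersection C(A) ∩ Der(A) of the centroid with the derivation algebra equals the set of ψ ∈ End_K(A) such that ψ vanishes on A·A and the image of ψ lies in the annihilator Ann_A(A). -/
/-- A derivation of a (not necessarily associative) algebra. -/
def IsAlgDerivation (K A : Type*) [CommRing K] [NonUnitalNonAssocRing A] [Module K A]
    (ψ : Module.End K A) : Prop :=
  ∀ a b : A, ψ (a * b) = ψ a * b + a * ψ b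

section

variable {K A : Type*} [CommRing K] [NonUnitalNonAssocRing A] [Module K A]
  {ψ : Module.End K A}

/- The derivation rule, read through the centroid identities, says `ψ (a * b) = ψ (a * b) + ψ (a * b)`. -/
theorem IsCentroidal.map_mul_eq_zero_of_isAlgDerivation (hc : IsCentroidal K A ψ)
    (hd : IsAlgDerivation K A ψ) (a b : A) : ψ (a * b) = 0 := by
  have h := hd a b
  rw [← (hc a b).2, ← (hc a b).1] at h
  exact right_eq_add.mp h

theorem IsCentroidal.mul_eq_zero_of_map_mul_eq_zero (hc : IsCentroidal K A ψ)
    (hz : ∀ a b : A, ψ (a * b) = 0) (x a : A) : ψ x * a = 0 ∧ a * ψ x = 0 :=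
  ⟨(hc x a).2 ▸ hz x a, (hc a x).1 ▸ hz a x⟩

theorem isCentroidal_of_map_mul_eq_zero (hz : ∀ a b : A, ψ (a * b) = 0)
    (hann : ∀ x a : A, ψ x * a = 0 ∧ a * ψ x = 0) : IsCentroidal K A ψ :=
  fun a b => ⟨by rw [hz, (hann b a).2], by rw [hz, (hann a b).1]⟩

theorem isAlgDerivation_of_map_mul_eq_zero (hz : ∀ a b : A, ψ (a * b) = 0)
    (hann : ∀ x a : A, ψ x * a = 0 ∧ a * ψ x = 0) : IsAlgDerivation K A ψ :=
  fun a b => by rw [hz, (hann a b).1, (hann b a).2, add_zero]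

end

theorem centroid_inter_der_general
    (K A : Type*) [CommRing K] [NonUnitalNonAssocRing A] [Module K A]
    (ψ : Module.End K A) :
    (IsCentroidal K A ψ ∧ IsAlgDerivation K A ψ) ↔
      ((∀ a b : A, ψ (a * b) = 0) ∧ ∀ (x a : A), ψ x * a = 0 ∧ a * ψ x = 0) := by
  constructor
  · rintro ⟨hc, hd⟩
    have hz := hc.map_mul_eq_zero_of_isAlgDerivation hd
    exact ⟨hz, hc.mul_eq_zero_of_map_mul_eq_zero hz⟩
  · rintro ⟨hz, hann⟩
    exact ⟨isCentroidal_of_map_mul_eq_zero hz hann, isAlgDerivation_of_map_mul_eq_zero hz hann⟩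

/-- `C(A) ∩ Der(A)` equals the set of endomorphisms vanishing on `A·A`
with image in the annihilator of `A`. -/
theorem centroid_inter_der
    (K A : Type*) [CommRing K] [NonUnitalNonAssocRing A] [Module K A]
    [SMulCommClass K A A] [IsScalarTower K A A]
    (ψ : Module.End K A) :
    (IsCentroidal K A ψ ∧ IsAlgDerivation K A ψ) ↔
      ((∀ a b : A, ψ (a * b) = 0) ∧ ∀ (x a : A), ψ x * a = 0 ∧ a * ψ x = 0) :=
  centroid_inter_der_general K A ψ
end

section
/- Let π: A → B be a surjective algebra homomorphism with A perfect and ker π ⊆ Ann_A(A). Then the induced map on centroids, sending χ ∈ C(A) with χ(ker π) ⊆ ker π to the unique χ̄ ∈ End(B) satisfying π∘χ = χ̄∘π, is injective and lands in C(B). -/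
/-- Let `π : A → B` be a surjective algebra homomorphism with `A` perfect and
`ker π ⊆ Ann_A(A)`.  The induced map on centroids (sending a kernel-preserving
centroidal `χ` to the unique `χ̄` with `π ∘ χ = χ̄ ∘ π`) lands in the centroid
of `B` and is injective. -/
theorem induced_centroid_map_injective
    (K A B : Type*) [CommRing K] [NonUnitalNonAssocRing A] [Module K A]
    [SMulCommClass K A A] [IsScalarTower K A A]
    [NonUnitalNonAssocRing B] [Module K B]
    [SMulCommClass K B B] [IsScalarTower K B B]
    (π : A →ₗ[K] B) (hπmul : ∀ a b : A, π (a * b) = π a * π b)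
    (hπsurj : Function.Surjective π)
    (hperf : Submodule.span K {x : A | ∃ a b : A, x = a * b} = ⊤)
    (hker : ∀ x : A, π x = 0 → ∀ a : A, x * a = 0 ∧ a * x = 0) :
    (∀ (χ : Module.End K A) (χbar : Module.End K B), IsCentroidal K A χ →
      (∀ x : A, π (χ x) = χbar (π x)) → IsCentroidal K B χbar) ∧
    (∀ (χ₁ χ₂ : Module.End K A) (χbar₁ χbar₂ : Module.End K B),
      IsCentroidal K A χ₁ → IsCentroidal K A χ₂ →
      (∀ x : A, π (χ₁ x) = χbar₁ (π x)) → (∀ x : A, π (χ₂ x) = χbar₂ (π x)) →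
      χbar₁ = χbar₂ → χ₁ = χ₂) := by
  constructor
  · intro χ χbar hχ hcomm b₁ b₂
    obtain ⟨a₁, rfl⟩ := hπsurj b₁
    obtain ⟨a₂, rfl⟩ := hπsurj b₂
    constructor
    · rw [← hπmul, ← hcomm, (hχ a₁ a₂).1, hπmul, hcomm]
    · rw [← hπmul, ← hcomm, (hχ a₁ a₂).2, hπmul, hcomm]
  · intro χ₁ χ₂ χbar₁ χbar₂ hχ₁ hχ₂ hc₁ hc₂ heq
    have hzero : ∀ x : A, π (χ₁ x - χ₂ x) = 0 := by
      intro x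
      rw [map_sub, hc₁, hc₂, heq, sub_self]
    ext x
    have hx : x ∈ Submodule.span K {x : A | ∃ a b : A, x = a * b} :=
      hperf ▸ Submodule.mem_top
    induction hx using Submodule.span_induction with
    | mem y hy =>
        obtain ⟨a, b, rfl⟩ := hy
        rw [(hχ₁ a b).1, (hχ₂ a b).1]
        have h := (hker _ (hzero b) a).2
        have h2 : a * χ₁ b - a * χ₂ b = 0 := by rw [← mul_sub]; exact h
        exact sub_eq_zero.mp h2
    | zero => simp
    | add y z hy hz ihy ihz => simp [map_add, ihy, ihz]
    | smul k y hy ihy => simp [map_smul, ihy]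
end

section
/- Let π: A → B be a surjective algebra homomorphism with A perfect, Ann_B(B) = 0, and ker π ⊆ Ann_A(A). Then ker π = Ann_A(A), every χ ∈ C(A) preserves ker π, and the induced map C(A) → C(B) is an injective algebra homomorphism. -/
/-- Let `π : A → B` be a surjective algebra homomorphism with `A` perfect,
`Ann_B(B) = 0` and `ker π ⊆ Ann_A(A)`.  Then `ker π = Ann_A(A)`, every
centroidal `χ` preserves `ker π`, the induced endomorphism `χ̄` of `B` exists
uniquely, is centroidal, and the induced map `C(A) → C(B)` is an injective
algebra homomorphism. -/
theorem induced_centroid_map_monomorphism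
    (K A B : Type*) [CommRing K] [NonUnitalNonAssocRing A] [Module K A]
    [SMulCommClass K A A] [IsScalarTower K A A]
    [NonUnitalNonAssocRing B] [Module K B]
    [SMulCommClass K B B] [IsScalarTower K B B]
    (π : A →ₗ[K] B) (hπmul : ∀ a b : A, π (a * b) = π a * π b)
    (hπsurj : Function.Surjective π)
    (hperf : Submodule.span K {x : A | ∃ a b : A, x = a * b} = ⊤)
    (hannB : ∀ y : B, (∀ b : B, y * b = 0 ∧ b * y = 0) → y = 0)
    (hker : ∀ x : A, π x = 0 → ∀ a : A, x * a = 0 ∧ a * x = 0) :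
    -- ker π = Ann_A(A)
    (∀ x : A, π x = 0 ↔ ∀ a : A, x * a = 0 ∧ a * x = 0) ∧
    -- every centroidal transformation preserves ker π
    (∀ χ : Module.End K A, IsCentroidal K A χ → ∀ x : A, π x = 0 → π (χ x) = 0) ∧
    -- the induced endomorphism exists uniquely and is centroidal
    (∀ χ : Module.End K A, IsCentroidal K A χ →
      ∃! χbar : Module.End K B, ∀ x : A, π (χ x) = χbar (π x)) ∧
    (∀ (χ : Module.End K A) (χbar : Module.End K B), IsCentroidal K A χ →
      (∀ x : A, π (χ x) = χbar (π x)) → IsCentroidal K B χbar) ∧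
    -- the induced map is injective
    (∀ (χ₁ χ₂ : Module.End K A) (χbar : Module.End K B),
      IsCentroidal K A χ₁ → IsCentroidal K A χ₂ →
      (∀ x : A, π (χ₁ x) = χbar (π x)) → (∀ x : A, π (χ₂ x) = χbar (π x)) →
      χ₁ = χ₂) ∧
    -- the induced map is multiplicative
    (∀ (χ₁ χ₂ : Module.End K A) (χbar₁ χbar₂ : Module.End K B),
      IsCentroidal K A χ₁ → IsCentroidal K A χ₂ →
      (∀ x : A, π (χ₁ x) = χbar₁ (π x)) → (∀ x : A, π (χ₂ x) = χbar₂ (π x)) →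
      ∀ x : A, π ((χ₁ * χ₂) x) = (χbar₁ * χbar₂) (π x)) := by
  classical
  -- ker π = Ann
  have hkerAnn : ∀ x : A, π x = 0 ↔ ∀ a : A, x * a = 0 ∧ a * x = 0 := by
    intro x
    refine ⟨hker x, fun h => ?_⟩
    apply hannB
    intro b
    obtain ⟨a, rfl⟩ := hπsurj b
    refine ⟨?_, ?_⟩
    · rw [← hπmul, (h a).1, map_zero]
    · rw [← hπmul, (h a).2, map_zero]
  -- preservation of the kernel
  have hpres : ∀ χ : Module.End K A, IsCentroidal K A χ → ∀ x : A, π x = 0 → π (χ x) = 0 := by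
    intro χ hχ x hx
    apply hannB
    intro b
    obtain ⟨a, rfl⟩ := hπsurj b
    refine ⟨?_, ?_⟩
    · have h1 : χ x * a = 0 := by rw [← (hχ x a).2, (hker x hx a).1, map_zero]
      rw [← hπmul, h1, map_zero]
    · have h1 : a * χ x = 0 := by rw [← (hχ a x).1, (hker x hx a).2, map_zero]
      rw [← hπmul, h1, map_zero]
  -- key: π x = π y → π (χ x) = π (χ y)
  have hkey : ∀ χ : Module.End K A, IsCentroidal K A χ → ∀ x y : A, π x = π y →
      π (χ x) = π (χ y) := by
    intro χ hχ x y hxy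
    have : π (χ (x - y)) = 0 := by
      apply hpres χ hχ
      rw [map_sub, hxy, sub_self]
    rw [map_sub, map_sub, sub_eq_zero] at this
    exact this
  -- existence and uniqueness of the induced endomorphism
  have hexist : ∀ χ : Module.End K A, IsCentroidal K A χ →
      ∃! χbar : Module.End K B, ∀ x : A, π (χ x) = χbar (π x) := by
    intro χ hχ
    let s : B → A := Function.surjInv hπsurj
    have hs : ∀ b : B, π (s b) = b := Function.surjInv_eq hπsurj
    let f : B → B := fun b => π (χ (s b))
    have hf : ∀ x : A, f (π x) = π (χ x) := by
      intro x
      exact hkey χ hχ _ _ (hs (π x))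
    have hadd : ∀ b c : B, f (b + c) = f b + f c := by
      intro b c
      obtain ⟨x, rfl⟩ := hπsurj b
      obtain ⟨y, rfl⟩ := hπsurj c
      rw [← map_add, hf, hf, hf, map_add, map_add]
    have hsmul : ∀ (k : K) (b : B), f (k • b) = k • f b := by
      intro k b
      obtain ⟨x, rfl⟩ := hπsurj b
      rw [← map_smul, hf, hf, map_smul, map_smul]
    refine ⟨{ toFun := f, map_add' := hadd, map_smul' := hsmul }, fun x => (hf x).symm, ?_⟩
    intro g hg
    ext b
    obtain ⟨x, rfl⟩ := hπsurj b
    simp only [LinearMap.coe_mk, AddHom.coe_mk]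
    rw [← hg x, hf x]
  refine ⟨hkerAnn, hpres, hexist, ?_, ?_, ?_⟩
  · -- induced map is centroidal
    intro χ χbar hχ hbar b c
    obtain ⟨a, rfl⟩ := hπsurj b
    obtain ⟨a', rfl⟩ := hπsurj c
    constructor
    · rw [← hπmul, ← hbar, (hχ a a').1, hπmul, hbar]
    · rw [← hπmul, ← hbar, (hχ a a').2, hπmul, hbar]
  · -- injectivity
    intro χ₁ χ₂ χbar hχ₁ hχ₂ h₁ h₂
    have hker' : ∀ x : A, π (χ₁ x - χ₂ x) = 0 := by
      intro x
      rw [map_sub, h₁, h₂, sub_self]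
    have hgen : ∀ x ∈ {x : A | ∃ a b : A, x = a * b}, χ₁ x = χ₂ x := by
      rintro _ ⟨a, b, rfl⟩
      rw [(hχ₁ a b).2, (hχ₂ a b).2, ← sub_eq_zero, ← sub_mul]
      exact (hker (χ₁ a - χ₂ a) (hker' a) b).1
    ext x
    have hx : x ∈ Submodule.span K {x : A | ∃ a b : A, x = a * b} := by
      rw [hperf]; trivial
    have : x ∈ LinearMap.ker (χ₁ - χ₂) := by
      refine Submodule.span_le.mpr ?_ hx
      intro y hy
      simp only [SetLike.mem_coe, LinearMap.mem_ker, LinearMap.sub_apply, sub_eq_zero]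
      exact hgen y hy
    simpa [sub_eq_zero] using this
  · -- multiplicativity
    intro χ₁ χ₂ χbar₁ χbar₂ hχ₁ hχ₂ h₁ h₂ x
    rw [Module.End.mul_apply, Module.End.mul_apply]
    rw [h₁, h₂]
end

section
/- Let A be a Λ-graded algebra over K which is graded-simple (A·A ≠ 0 and the only graded ideals are 0 and A). Then for every nonzero homogeneous element a ∈ A, the evaluation map ev_a: C(A) → A, χ ↦ χ(a), is injective. -/
section Centroid

variable {K A : Type*} [CommRing K] [NonUnitalNonAssocRing A] [Module K A]

theorem IsCentroidal.sub {χ ψ : Module.End K A} (hχ : IsCentroidal K A χ)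
    (hψ : IsCentroidal K A ψ) : IsCentroidal K A (χ - ψ) := fun a b =>
  ⟨by rw [LinearMap.sub_apply, (hχ a b).1, (hψ a b).1, LinearMap.sub_apply, mul_sub],
    by rw [LinearMap.sub_apply, (hχ a b).2, (hψ a b).2, LinearMap.sub_apply, sub_mul]⟩

theorem IsCentroidal.isAlgIdeal_ker_s10 {χ : Module.End K A} (hχ : IsCentroidal K A χ) :
    IsAlgIdeal K A (LinearMap.ker χ) := fun b x (hx : χ x = 0) =>
  ⟨show χ (b * x) = 0 by rw [(hχ b x).1, hx, mul_zero],
    show χ (x * b) = 0 by rw [(hχ x b).2, hx, zero_mul]⟩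

end Centroid

section GradedCore

variable {K A Λ : Type*} [CommRing K] [NonUnitalNonAssocRing A] [Module K A]
  (g : Λ → Submodule K A) (I : Submodule K A)

/-- The largest graded submodule of `I`: the span of its homogeneous elements. -/
def gradedCore : Submodule K A :=
  ⨆ mu, I ⊓ g mu

variable {g I}

theorem gradedCore_le : gradedCore g I ≤ I :=
  iSup_le fun _ => inf_le_left

theorem mem_gradedCore_of_mem {x : A} {mu : Λ} (hxI : x ∈ I) (hxg : x ∈ g mu) :
    x ∈ gradedCore g I :=
  Submodule.mem_iSup_of_mem mu ⟨hxI, hxg⟩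

theorem gradedCore_eq_iSup_inf : gradedCore g I = ⨆ mu, gradedCore g I ⊓ g mu :=
  le_antisymm
    (iSup_le fun mu => (le_inf (le_iSup (fun m => I ⊓ g m) mu) inf_le_right).trans
      (le_iSup (fun m => gradedCore g I ⊓ g m) mu))
    (iSup_le fun _ => inf_le_left)

theorem IsAlgIdeal.gradedCore [Add Λ] (hg : ⨆ mu, g mu = ⊤)
    (hgmul : ∀ (lam mu : Λ), ∀ x ∈ g lam, ∀ y ∈ g mu, x * y ∈ g (lam + mu))
    (hI : IsAlgIdeal K A I) : IsAlgIdeal K A (gradedCore g I) := by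
  intro b x hx
  refine Submodule.iSup_induction (motive := fun x => b * x ∈ _ ∧ x * b ∈ _) _ hx ?_
    (by simp) fun y z hy hz => ⟨by rw [mul_add]; exact add_mem hy.1 hz.1,
      by rw [add_mul]; exact add_mem hy.2 hz.2⟩
  rintro mu y ⟨hyI, hyg⟩
  have hb : b ∈ ⨆ l, g l := hg ▸ Submodule.mem_top
  refine Submodule.iSup_induction (motive := fun b => b * y ∈ _ ∧ y * b ∈ _) _ hb ?_
    (by simp) fun c d hc hd => ⟨by rw [add_mul]; exact add_mem hc.1 hd.1,
      by rw [mul_add]; exact add_mem hc.2 hd.2⟩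
  intro l c hc
  exact ⟨mem_gradedCore_of_mem (hI c y hyI).1 (hgmul l mu c hc y hyg),
    mem_gradedCore_of_mem (hI c y hyI).2 (hgmul mu l y hyg c hc)⟩

end GradedCore

theorem centroid_eval_injective_of_gradedSimple_general
    (K A : Type*) [CommRing K] [NonUnitalNonAssocRing A] [Module K A]
    (Λ : Type*) [AddCommGroup Λ] [DecidableEq Λ]
    (g : Λ → Submodule K A)
    (hdecomp : DirectSum.IsInternal g)
    (hgmul : ∀ (lam mu : Λ), ∀ x ∈ g lam, ∀ y ∈ g mu, x * y ∈ g (lam + mu))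
    (hgsimple : ∀ I : Submodule K A, IsAlgIdeal K A I →
      (I = ⨆ lam : Λ, I ⊓ g lam) → I = ⊥ ∨ I = ⊤)
    (a : A) (ha : a ≠ 0) (lam : Λ) (halam : a ∈ g lam)
    (χ ψ : Module.End K A) (hχ : IsCentroidal K A χ) (hψ : IsCentroidal K A ψ)
    (heval : χ a = ψ a) : χ = ψ := by
  set I := gradedCore g (LinearMap.ker (χ - ψ))
  have hI : IsAlgIdeal K A I :=
    (hχ.sub hψ).isAlgIdeal_ker_s10.gradedCore hdecomp.submodule_iSup_eq_top hgmul
  have haI : a ∈ I := mem_gradedCore_of_mem (by simp [heval]) halam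
  rcases hgsimple I hI gradedCore_eq_iSup_inf with hbot | htop
  · exact absurd ((Submodule.mem_bot K).mp (hbot ▸ haI)) ha
  · have hker : LinearMap.ker (χ - ψ) = ⊤ := top_unique (htop ▸ gradedCore_le)
    exact sub_eq_zero.mp (LinearMap.ker_eq_top.mp hker)

/-- For a graded-simple `Λ`-graded algebra `A`, evaluation at a nonzero
homogeneous element is injective on the centroid. -/
theorem centroid_eval_injective_of_gradedSimple
    (K A : Type*) [CommRing K] [NonUnitalNonAssocRing A] [Module K A]
    [SMulCommClass K A A] [IsScalarTower K A A]
    (Λ : Type*) [AddCommGroup Λ] [DecidableEq Λ]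
    (g : Λ → Submodule K A)
    (hdecomp : DirectSum.IsInternal g)
    (hgmul : ∀ (lam mu : Λ), ∀ x ∈ g lam, ∀ y ∈ g mu, x * y ∈ g (lam + mu))
    (hAA : ∃ a b : A, a * b ≠ 0)
    (hgsimple : ∀ I : Submodule K A, IsAlgIdeal K A I →
      (I = ⨆ lam : Λ, I ⊓ g lam) → I = ⊥ ∨ I = ⊤)
    (a : A) (ha : a ≠ 0) (lam : Λ) (halam : a ∈ g lam)
    (χ ψ : Module.End K A) (hχ : IsCentroidal K A χ) (hψ : IsCentroidal K A ψ)
    (heval : χ a = ψ a) : χ = ψ :=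
  centroid_eval_injective_of_gradedSimple_general K A Λ g hdecomp hgmul hgsimple a ha lam halam χ ψ
    hχ hψ heval
end

section
/- If A is a graded-simple Λ-graded algebra, then its centroid C(A) equals the graded centroid grCent(A) = ⊕_λ C(A)^λ, is a commutative associative division-graded algebra, and its support {λ : C(A)^λ ≠ 0} is a subgroup of Λ. -/
/-- An endomorphism homogeneous of degree `lam` with respect to a grading `g`. -/
def IsHomogOfDegree (K A : Type*) [CommRing K] [NonUnitalNonAssocRing A] [Module K A]
    {Λ : Type*} [AddCommGroup Λ] (g : Λ → Submodule K A)
    (χ : Module.End K A) (lam : Λ) : Prop :=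
  ∀ mu : Λ, ∀ x ∈ g mu, χ x ∈ g (lam + mu)

set_option linter.unusedSectionVars false

section GC

open DirectSum

variable {K A : Type*} [CommRing K] [NonUnitalNonAssocRing A] [Module K A]
  [SMulCommClass K A A] [IsScalarTower K A A]
  {Λ : Type*} [AddCommGroup Λ] [DecidableEq Λ]
  (g : Λ → Submodule K A) [DirectSum.Decomposition g]

/-- The projection onto the `nu`-th graded piece. -/
noncomputable def proj (nu : Λ) : Module.End K A :=
  (g nu).subtype ∘ₗ (DirectSum.component K Λ (fun i => g i) nu) ∘ₗ
    (DirectSum.decomposeLinearEquiv g).toLinearMap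

lemma proj_apply (nu : Λ) (x : A) :
    proj g nu x = (DirectSum.decompose g x nu : A) := rfl

lemma proj_mem (nu : Λ) (x : A) : proj g nu x ∈ g nu := (DirectSum.decompose g x nu).2

lemma proj_of_mem_same {nu : Λ} {x : A} (hx : x ∈ g nu) : proj g nu x = x :=
  DirectSum.decompose_of_mem_same g hx

lemma proj_of_mem_ne {mu nu : Λ} {x : A} (hx : x ∈ g mu) (h : mu ≠ nu) :
    proj g nu x = 0 :=
  DirectSum.decompose_of_mem_ne g hx h

open scoped Classical in
lemma sum_proj (x : A) :
    ∑ nu ∈ (DirectSum.decompose g x).support, proj g nu x = x :=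
  DirectSum.sum_support_decompose g x

open scoped Classical in
lemma proj_eq_zero_of_not_mem_support {x : A} {nu : Λ}
    (h : nu ∉ (DirectSum.decompose g x).support) : proj g nu x = 0 := by
  rw [proj_apply]
  rw [DFinsupp.notMem_support_iff] at h
  rw [h]; rfl


/-- For a homogeneous map, projections commute with the map up to a shift. -/
lemma proj_comm {χ : Module.End K A} {lam : Λ} (hχ : IsHomogOfDegree K A g χ lam)
    (x : A) (mu : Λ) : proj g (lam + mu) (χ x) = χ (proj g mu x) := by
  classical
  have hx := sum_proj g x
  calc proj g (lam + mu) (χ x)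
      = ∑ nu ∈ (DirectSum.decompose g x).support,
          proj g (lam + mu) (χ (proj g nu x)) := by
        conv_lhs => rw [← hx, map_sum, map_sum]
    _ = χ (proj g mu x) := by
        rw [Finset.sum_eq_single mu
          (fun nu _ hne => proj_of_mem_ne g (hχ nu _ (proj_mem g nu x))
            (fun h => hne (by exact add_left_cancel h)))
          (fun hmu => by rw [proj_eq_zero_of_not_mem_support g hmu, map_zero, map_zero])]
        exact proj_of_mem_same g (hχ mu _ (proj_mem g mu x))

/-- A submodule all of whose elements have all components inside it is graded. -/
lemma graded_of_projMem (I : Submodule K A) (hp : ∀ x ∈ I, ∀ nu : Λ, proj g nu x ∈ I) :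
    I = ⨆ lam : Λ, I ⊓ g lam := by
  classical
  refine le_antisymm (fun x hx => ?_) (iSup_le fun lam => inf_le_left)
  rw [← sum_proj g x]
  exact Submodule.sum_mem _ fun nu _ =>
    Submodule.mem_iSup_of_mem nu ⟨hp x hx nu, proj_mem g nu x⟩

variable (hgsimple : ∀ I : Submodule K A, IsAlgIdeal K A I →
      (I = ⨆ lam : Λ, I ⊓ g lam) → I = ⊥ ∨ I = ⊤)

include hgsimple

/-- A nonzero graded ideal is everything. -/
lemma gradedIdeal_eq_top {I : Submodule K A} (hI : IsAlgIdeal K A I)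
    (hp : ∀ x ∈ I, ∀ nu : Λ, proj g nu x ∈ I) (hne : I ≠ ⊥) : I = ⊤ :=
  (hgsimple I hI (graded_of_projMem g I hp)).resolve_left hne

/-- A homogeneous centroidal map killing a nonzero element is zero. -/
lemma eq_zero_of_apply_eq_zero {χ : Module.End K A} (hc : IsCentroidal K A χ)
    {lam : Λ} (hh : IsHomogOfDegree K A g χ lam) {a : A} (ha : a ≠ 0)
    (h0 : χ a = 0) : χ = 0 := by
  have hI : IsAlgIdeal K A (LinearMap.ker χ) := by
    intro c x hx
    constructor
    · rw [LinearMap.mem_ker, (hc c x).1, LinearMap.mem_ker.mp hx, mul_zero]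
    · rw [LinearMap.mem_ker, (hc x c).2, LinearMap.mem_ker.mp hx, zero_mul]
  have hp : ∀ x ∈ LinearMap.ker χ, ∀ nu : Λ, proj g nu x ∈ LinearMap.ker χ := by
    intro x hx nu
    rw [LinearMap.mem_ker, ← proj_comm g hh, LinearMap.mem_ker.mp hx, map_zero]
  have := gradedIdeal_eq_top g hgsimple hI hp
    (fun h => ha (by simpa [h] using (LinearMap.mem_ker.mpr h0)))
  ext x
  simpa using LinearMap.mem_ker.mp (this ▸ Submodule.mem_top : x ∈ LinearMap.ker χ)

/-- A nonzero homogeneous centroidal map is injective. -/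
lemma injective_of_ne_zero {χ : Module.End K A} (hc : IsCentroidal K A χ)
    {lam : Λ} (hh : IsHomogOfDegree K A g χ lam) (h0 : χ ≠ 0) :
    Function.Injective χ := by
  rw [← LinearMap.ker_eq_bot, LinearMap.ker_eq_bot']
  intro m hm
  by_contra hne
  exact h0 (eq_zero_of_apply_eq_zero g hgsimple hc hh hne hm)

/-- A nonzero homogeneous centroidal map is surjective. -/
lemma surjective_of_ne_zero {χ : Module.End K A} (hc : IsCentroidal K A χ)
    {lam : Λ} (hh : IsHomogOfDegree K A g χ lam) (h0 : χ ≠ 0) :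
    Function.Surjective χ := by
  rw [← LinearMap.range_eq_top]
  refine gradedIdeal_eq_top g hgsimple ?_ ?_ ?_
  · rintro c x ⟨y, rfl⟩
    exact ⟨⟨c * y, (hc c y).1⟩, ⟨y * c, (hc y c).2.symm ▸ rfl⟩⟩
  · rintro x ⟨y, rfl⟩ nu
    refine ⟨proj g (-lam + nu) y, ?_⟩
    have := proj_comm g hh y (-lam + nu)
    rw [add_neg_cancel_left] at this
    exact this.symm
  · intro h
    exact h0 (LinearMap.range_eq_bot.mp h)


omit hgsimple in
open scoped Classical in
lemma mul_eq_sum (a b : A) :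
    a * b = ∑ al ∈ (DirectSum.decompose g a).support,
      ∑ be ∈ (DirectSum.decompose g b).support, proj g al a * proj g be b := by
  conv_lhs => rw [← sum_proj g a, ← sum_proj g b]
  rw [Finset.sum_mul_sum]

lemma span_mul_eq_top
    (hgmul : ∀ (lam mu : Λ), ∀ x ∈ g lam, ∀ y ∈ g mu, x * y ∈ g (lam + mu))
    (hAA : ∃ a b : A, a * b ≠ 0) :
    Submodule.span K {z : A | ∃ a b : A, z = a * b} = ⊤ := by
  classical
  set S : Set A := {z : A | ∃ a b : A, z = a * b} with hS
  refine gradedIdeal_eq_top g hgsimple ?_ ?_ ?_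
  · intro c x _
    exact ⟨Submodule.subset_span ⟨c, x, rfl⟩, Submodule.subset_span ⟨x, c, rfl⟩⟩
  · intro x hx nu
    induction hx using Submodule.span_induction with
    | mem z hz =>
        obtain ⟨a, b, rfl⟩ := hz
        rw [mul_eq_sum g a b, map_sum]
        refine Submodule.sum_mem _ fun al _ => ?_
        rw [map_sum]
        refine Submodule.sum_mem _ fun be _ => ?_
        by_cases h : al + be = nu
        · rw [proj_of_mem_same g (h ▸ hgmul al be _ (proj_mem g al a) _ (proj_mem g be b))]
          exact Submodule.subset_span ⟨_, _, rfl⟩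
        · rw [proj_of_mem_ne g (hgmul al be _ (proj_mem g al a) _ (proj_mem g be b)) h]
          exact Submodule.zero_mem _
    | zero => rw [map_zero]; exact Submodule.zero_mem _
    | add x y hx hy ihx ihy => rw [map_add]; exact Submodule.add_mem _ ihx ihy
    | smul k x hx ihx => rw [map_smul]; exact Submodule.smul_mem _ k ihx
  · obtain ⟨a, b, hab⟩ := hAA
    intro h
    have : a * b ∈ Submodule.span K S := Submodule.subset_span ⟨a, b, rfl⟩
    rw [h, Submodule.mem_bot] at this
    exact hab this

/-- Centroidal maps commute. -/
lemma centroid_comm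
    (hgmul : ∀ (lam mu : Λ), ∀ x ∈ g lam, ∀ y ∈ g mu, x * y ∈ g (lam + mu))
    (hAA : ∃ a b : A, a * b ≠ 0)
    {χ ψ : Module.End K A} (hχ : IsCentroidal K A χ) (hψ : IsCentroidal K A ψ) :
    χ * ψ = ψ * χ := by
  ext x
  have hx : x ∈ Submodule.span K {z : A | ∃ a b : A, z = a * b} := by
    rw [span_mul_eq_top g hgsimple hgmul hAA]; exact Submodule.mem_top
  rw [Module.End.mul_apply, Module.End.mul_apply]
  induction hx using Submodule.span_induction with
  | mem z hz =>
      obtain ⟨a, b, rfl⟩ := hz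
      rw [(hψ a b).1, (hχ a (ψ b)).2, (hχ a b).2, (hψ (χ a) b).1]
  | zero => simp
  | add x y hx hy ihx ihy => simp [ihx, ihy]
  | smul k x hx ihx => simp [ihx]


omit hgsimple in
lemma proj_mul_sum_right
    (hgmul : ∀ (lam mu : Λ), ∀ x ∈ g lam, ∀ y ∈ g mu, x * y ∈ g (lam + mu))
    {a : A} {al : Λ} (ha : a ∈ g al) (y : A) (de : Λ) :
    proj g (al + de) (a * y) = a * proj g de y := by
  classical
  conv_lhs => rw [← sum_proj g y, Finset.mul_sum, map_sum]
  rw [Finset.sum_eq_single de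
    (fun nu _ hne => proj_of_mem_ne g (hgmul al nu _ ha _ (proj_mem g nu y))
      (fun h => hne (add_left_cancel h)))
    (fun hde => by rw [proj_eq_zero_of_not_mem_support g hde, mul_zero, map_zero])]
  exact proj_of_mem_same g (hgmul al de _ ha _ (proj_mem g de y))

omit hgsimple in
lemma proj_mul_sum_left
    (hgmul : ∀ (lam mu : Λ), ∀ x ∈ g lam, ∀ y ∈ g mu, x * y ∈ g (lam + mu))
    {b : A} {be : Λ} (hb : b ∈ g be) (y : A) (de : Λ) :
    proj g (de + be) (y * b) = proj g de y * b := by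
  classical
  conv_lhs => rw [← sum_proj g y, Finset.sum_mul, map_sum]
  rw [Finset.sum_eq_single de
    (fun nu _ hne => proj_of_mem_ne g (hgmul nu be _ (proj_mem g nu y) _ hb)
      (fun h => hne (by
        have := add_right_cancel h
        exact this)))
    (fun hde => by rw [proj_eq_zero_of_not_mem_support g hde, zero_mul, map_zero])]
  exact proj_of_mem_same g (hgmul de be _ (proj_mem g de y) _ hb)

/-- The degree-`lam` homogeneous component of an endomorphism. -/
noncomputable def hcomp (χ : Module.End K A) (lam : Λ) : Module.End K A :=
  ((DirectSum.decomposeLinearEquiv g).symm.toLinearMap.comp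
    ((DirectSum.toModule K Λ (⨁ i, (g i : Submodule K A)) fun mu =>
        (DirectSum.lof K Λ (fun i => (g i : Submodule K A)) (lam + mu)).comp
          ((DirectSum.component K Λ (fun i => (g i : Submodule K A)) (lam + mu)).comp
            ((DirectSum.decomposeLinearEquiv g).toLinearMap.comp
              (χ.comp (g mu).subtype)))).comp
      (DirectSum.decomposeLinearEquiv g).toLinearMap))

omit hgsimple in
lemma hcomp_apply_of_mem (χ : Module.End K A) (lam : Λ) {mu : Λ} {x : A}
    (hx : x ∈ g mu) : hcomp g χ lam x = proj g (lam + mu) (χ x) := by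
  rw [hcomp]
  simp only [LinearMap.comp_apply, LinearEquiv.coe_coe,
    DirectSum.decomposeLinearEquiv_apply, DirectSum.decompose_of_mem g hx,
    ← DirectSum.lof_eq_of K, DirectSum.toModule_lof]
  have h2 := LinearMap.congr_fun
    (DirectSum.decomposeLinearEquiv_symm_comp_lof (R := K) g (lam + mu))
    ((DirectSum.component K Λ (fun i => (g i : Submodule K A)) (lam + mu))
      ((DirectSum.decomposeLinearEquiv g) (χ ((g mu).subtype ⟨x, hx⟩))))
  simp only [LinearMap.comp_apply, LinearEquiv.coe_coe,
    DirectSum.decomposeLinearEquiv_apply] at h2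
  rw [h2]
  rfl
omit hgsimple in
lemma hcomp_homog (χ : Module.End K A) (lam : Λ) :
    IsHomogOfDegree K A g (hcomp g χ lam) lam := fun mu x hx => by
  rw [hcomp_apply_of_mem g χ lam hx]
  exact proj_mem g (lam + mu) (χ x)

omit hgsimple in
lemma hcomp_centroidal
    (hgmul : ∀ (lam mu : Λ), ∀ x ∈ g lam, ∀ y ∈ g mu, x * y ∈ g (lam + mu))
    {χ : Module.End K A} (hχ : IsCentroidal K A χ) (lam : Λ) :
    IsCentroidal K A (hcomp g χ lam) := by
  classical
  -- homogeneous case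
  have key : ∀ (al be : Λ), ∀ a ∈ g al, ∀ b ∈ g be,
      hcomp g χ lam (a * b) = a * hcomp g χ lam b ∧
      hcomp g χ lam (a * b) = hcomp g χ lam a * b := by
    intro al be a ha b hb
    have hab : a * b ∈ g (al + be) := hgmul al be a ha b hb
    constructor
    · rw [hcomp_apply_of_mem g χ lam hab, hcomp_apply_of_mem g χ lam hb, (hχ a b).1]
      have := proj_mul_sum_right g hgmul ha (χ b) (lam + be)
      rw [← this]
      congr 1
      abel_nf
    · rw [hcomp_apply_of_mem g χ lam hab, hcomp_apply_of_mem g χ lam ha, (hχ a b).2]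
      have := proj_mul_sum_left g hgmul hb (χ a) (lam + al)
      rw [← this]
      congr 1
      abel_nf
  intro a b
  have expand : ∀ (F G H : Module.End K A),
      (∀ (al be : Λ), ∀ x ∈ g al, ∀ y ∈ g be, F (x * y) = G x * H y) →
      F (a * b) = G a * H b := by
    intro F G H h
    conv_rhs => rw [← sum_proj g a, ← sum_proj g b, map_sum, map_sum, Finset.sum_mul_sum]
    rw [mul_eq_sum g a b, map_sum]
    refine Finset.sum_congr rfl fun al _ => ?_
    rw [map_sum]
    exact Finset.sum_congr rfl fun be _ =>
      h al be _ (proj_mem g al a) _ (proj_mem g be b)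
  constructor
  · exact expand (hcomp g χ lam) 1 (hcomp g χ lam)
      (fun al be x hx y hy => by
        simpa using (key al be x hx y hy).1)
  · exact expand (hcomp g χ lam) (hcomp g χ lam) 1
      (fun al be x hx y hy => by
        simpa using (key al be x hx y hy).2)

/-- Any centroidal map lies in the span of homogeneous centroidal maps. -/
lemma centroid_mem_span
    (hgmul : ∀ (lam mu : Λ), ∀ x ∈ g lam, ∀ y ∈ g mu, x * y ∈ g (lam + mu))
    (hAA : ∃ a b : A, a * b ≠ 0)
    {χ : Module.End K A} (hχ : IsCentroidal K A χ) :
    χ ∈ Submodule.span K {ψ : Module.End K A |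
        IsCentroidal K A ψ ∧ ∃ lam : Λ, IsHomogOfDegree K A g ψ lam} := by
  classical
  -- a nonzero homogeneous element
  obtain ⟨a, b, hab⟩ := hAA
  have ha : a ≠ 0 := fun h => hab (by rw [h, zero_mul])
  obtain ⟨mu0, ha0⟩ : ∃ mu0, proj g mu0 a ≠ 0 := by
    by_contra h
    push_neg at h
    exact ha (by rw [← sum_proj g a]; exact Finset.sum_eq_zero fun nu _ => h nu)
  set a0 := proj g mu0 a with ha0def
  have ha0mem : a0 ∈ g mu0 := proj_mem g mu0 a
  set S : Finset Λ := (DirectSum.decompose g (χ a0)).support.image (fun nu => nu - mu0)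
    with hSdef
  have hmemS : ∀ lam : Λ, hcomp g χ lam ≠ 0 → lam ∈ S := by
    intro lam hne
    by_contra hlam
    refine hne (eq_zero_of_apply_eq_zero g hgsimple (hcomp_centroidal g hgmul hχ lam)
      (hcomp_homog g χ lam) ha0 ?_)
    rw [hcomp_apply_of_mem g χ lam ha0mem]
    by_contra hpz
    have : lam + mu0 ∈ (DirectSum.decompose g (χ a0)).support := by
      rw [DFinsupp.mem_support_iff]
      intro h
      exact hpz (by rw [proj_apply, h]; rfl)
    exact hlam (Finset.mem_image.mpr ⟨lam + mu0, this, by rw [add_sub_cancel_right]⟩)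
  have hsum : χ = ∑ lam ∈ S, hcomp g χ lam := by
    apply DirectSum.decompose_lhom_ext g
    intro mu
    apply LinearMap.ext
    intro xm
    obtain ⟨x, hx⟩ := xm
    simp only [LinearMap.comp_apply, Submodule.coe_subtype, LinearMap.coe_sum,
      Finset.sum_apply]
    have h1 : ∀ lam ∈ S, hcomp g χ lam x = proj g (lam + mu) (χ x) :=
      fun lam _ => hcomp_apply_of_mem g χ lam hx
    rw [Finset.sum_congr rfl h1]
    have hinj : ∀ y ∈ S, ∀ z ∈ S, y + mu = z + mu → y = z :=
      fun y _ z _ h => add_right_cancel h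
    have h2 : ∑ lam ∈ S, proj g (lam + mu) (χ x)
        = ∑ nu ∈ S.image (fun lam => lam + mu), proj g nu (χ x) :=
      (Finset.sum_image (f := fun nu => proj g nu (χ x))
        (g := fun lam => lam + mu) hinj).symm
    rw [h2]
    conv_lhs => rw [← sum_proj g (χ x)]
    refine Finset.sum_subset ?_ ?_
    · intro nu hnu
      have hnz : proj g nu (χ x) ≠ 0 := by
        intro h
        rw [DFinsupp.mem_support_iff] at hnu
        exact hnu (by
          have := h
          rw [proj_apply] at this
          exact Subtype.coe_injective (by simpa using this))
      have : hcomp g χ (nu - mu) ≠ 0 := by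
        intro h
        apply hnz
        have := hcomp_apply_of_mem g χ (nu - mu) hx
        rw [sub_add_cancel] at this
        rw [← this, h]
        rfl
      exact Finset.mem_image.mpr ⟨nu - mu, hmemS _ this, sub_add_cancel nu mu⟩
    · intro nu _ hnu
      exact proj_eq_zero_of_not_mem_support g (by simpa using hnu)
  rw [hsum]
  exact Submodule.sum_mem _ fun lam _ => Submodule.subset_span
    ⟨hcomp_centroidal g hgmul hχ lam, lam, hcomp_homog g χ lam⟩

/-- A nonzero homogeneous centroidal map is invertible with homogeneous centroidal inverse. -/
lemma exists_inverse {χ : Module.End K A} {lam : Λ} (hc : IsCentroidal K A χ)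
    (hh : IsHomogOfDegree K A g χ lam) (h0 : χ ≠ 0) :
    ∃ ψ : Module.End K A, IsCentroidal K A ψ ∧ IsHomogOfDegree K A g ψ (-lam) ∧
      χ * ψ = 1 ∧ ψ * χ = 1 := by
  classical
  have hinj := injective_of_ne_zero g hgsimple hc hh h0
  have hsurj := surjective_of_ne_zero g hgsimple hc hh h0
  let e : A ≃ₗ[K] A := LinearEquiv.ofBijective χ ⟨hinj, hsurj⟩
  have he : ∀ x, e x = χ x := fun x => rfl
  refine ⟨(e.symm : A →ₗ[K] A), ?_, ?_, ?_, ?_⟩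
  · intro a b
    have h1 : χ (e.symm (a * b)) = a * b := by rw [← he]; exact e.apply_symm_apply _
    constructor
    · simp only [LinearEquiv.coe_coe]
      apply hinj
      rw [h1, (hc a (e.symm b)).1, ← he, e.apply_symm_apply]
    · simp only [LinearEquiv.coe_coe]
      apply hinj
      rw [h1, (hc (e.symm a) b).2, ← he, e.apply_symm_apply]
  · intro mu x hx
    have hz : ∀ nu : Λ, nu ≠ -lam + mu → proj g nu (e.symm x) = 0 := by
      intro nu hnu
      apply hinj
      rw [map_zero, ← proj_comm g hh (e.symm x) nu]
      have : χ (e.symm x) = x := by rw [← he]; exact e.apply_symm_apply _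
      rw [this]
      exact proj_of_mem_ne g hx (fun h => hnu (by rw [h]; abel))
    have : (e.symm x : A) = proj g (-lam + mu) (e.symm x) := by
      conv_lhs => rw [← sum_proj g (e.symm x)]
      exact Finset.sum_eq_single (-lam + mu)
        (fun nu _ hne => hz nu hne)
        (fun h => (proj_eq_zero_of_not_mem_support g h))
    rw [show ((e.symm : A →ₗ[K] A) x) = (e.symm x : A) from rfl, this]
    exact proj_mem g (-lam + mu) (e.symm x)
  · ext x
    simp only [Module.End.mul_apply, LinearEquiv.coe_coe, Module.End.one_apply]
    rw [← he, e.apply_symm_apply]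
  · ext x
    simp only [Module.End.mul_apply, LinearEquiv.coe_coe, Module.End.one_apply]
    rw [← he, e.symm_apply_apply]

end GC

/-- For a graded-simple `Λ`-graded algebra, the centroid coincides with the graded
centroid, is commutative, is division-graded, and its support is a subgroup of `Λ`. -/
theorem centroid_of_gradedSimple
    (K A : Type*) [CommRing K] [NonUnitalNonAssocRing A] [Module K A]
    [SMulCommClass K A A] [IsScalarTower K A A]
    (Λ : Type*) [AddCommGroup Λ] [DecidableEq Λ]
    (g : Λ → Submodule K A)
    (hdecomp : DirectSum.IsInternal g)
    (hgmul : ∀ (lam mu : Λ), ∀ x ∈ g lam, ∀ y ∈ g mu, x * y ∈ g (lam + mu))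
    (hAA : ∃ a b : A, a * b ≠ 0)
    (hgsimple : ∀ I : Submodule K A, IsAlgIdeal K A I →
      (I = ⨆ lam : Λ, I ⊓ g lam) → I = ⊥ ∨ I = ⊤) :
    -- the centroid equals the graded centroid
    (∀ χ : Module.End K A, IsCentroidal K A χ →
      χ ∈ Submodule.span K {ψ : Module.End K A |
        IsCentroidal K A ψ ∧ ∃ lam : Λ, IsHomogOfDegree K A g ψ lam}) ∧
    -- the centroid is commutative
    (∀ χ ψ : Module.End K A, IsCentroidal K A χ → IsCentroidal K A ψ → χ * ψ = ψ * χ) ∧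
    -- the centroid is division-graded
    (∀ (χ : Module.End K A) (lam : Λ), IsCentroidal K A χ →
      IsHomogOfDegree K A g χ lam → χ ≠ 0 →
      ∃ ψ : Module.End K A, IsCentroidal K A ψ ∧ IsHomogOfDegree K A g ψ (-lam) ∧
        χ * ψ = 1 ∧ ψ * χ = 1) ∧
    -- the support of the centroid is a subgroup of Λ
    (∃ Γ : AddSubgroup Λ, ∀ lam : Λ, lam ∈ Γ ↔
      ∃ χ : Module.End K A, IsCentroidal K A χ ∧ IsHomogOfDegree K A g χ lam ∧ χ ≠ 0) := by
  letI : DirectSum.Decomposition g := hdecomp.chooseDecomposition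
  obtain ⟨a, b, hab⟩ := hAA
  have hane : a ≠ 0 := fun h => hab (by rw [h, zero_mul])
  refine ⟨fun χ hχ => centroid_mem_span g hgsimple hgmul ⟨a, b, hab⟩ hχ,
    fun χ ψ hχ hψ => centroid_comm g hgsimple hgmul ⟨a, b, hab⟩ hχ hψ,
    fun χ lam hc hh h0 => exists_inverse g hgsimple hc hh h0, ?_⟩
  refine ⟨{
    carrier := {lam : Λ | ∃ χ : Module.End K A,
      IsCentroidal K A χ ∧ IsHomogOfDegree K A g χ lam ∧ χ ≠ 0}
    zero_mem' := ?_
    add_mem' := ?_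
    neg_mem' := ?_ }, fun lam => Iff.rfl⟩
  · intro lam mu
    rintro ⟨χ, hχc, hχh, hχ0⟩ ⟨ψ, hψc, hψh, hψ0⟩
    refine ⟨χ * ψ, ?_, ?_, ?_⟩
    · intro x y
      simp only [Module.End.mul_apply]
      exact ⟨by rw [(hψc x y).1, (hχc x (ψ y)).1], by rw [(hψc x y).2, (hχc (ψ x) y).2]⟩
    · intro nu x hx
      simp only [Module.End.mul_apply]
      have := hχh (mu + nu) _ (hψh nu x hx)
      rwa [← add_assoc] at this
    · have hinj := injective_of_ne_zero g hgsimple hχc hχh hχ0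
      obtain ⟨x, hx⟩ : ∃ x, ψ x ≠ 0 := by
        by_contra h
        push_neg at h
        exact hψ0 (LinearMap.ext fun x => by rw [h x]; rfl)
      intro h
      apply hx
      apply hinj
      rw [map_zero]
      have := congrArg (fun f : Module.End K A => f x) h
      simpa using this
  · refine ⟨1, fun x y => by simp, fun mu x hx => by rw [zero_add]; simpa using hx, ?_⟩
    intro h
    exact hane (by
      have := congrArg (fun f : Module.End K A => f a) h
      simpa using this)
  · intro lam
    rintro ⟨χ, hχc, hχh, hχ0⟩
    obtain ⟨ψ, hψc, hψh, hl, hr⟩ := exists_inverse g hgsimple hχc hχh hχ0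
    refine ⟨ψ, hψc, hψh, ?_⟩
    intro h
    rw [h, zero_mul] at hr
    exact hane (by
      have := congrArg (fun f : Module.End K A => f a) hr
      simpa using this.symm)
end

section
/- Let L be a Lie algebra with a toral subalgebra h and let J be a C(L)-invariant ideal such that for some nonzero α ∈ h*, dim(J ∩ L_α) = 1 and the ideal of L generated by J ∩ L_α equals J. Then C(L) = F·id ⊕ {ψ ∈ C(L) : ψ(J) = 0}. -/
/-!
A centroidal map `χ` commutes with every `ad h`, so it preserves weight spaces; being `C(L)`-stable,
`J` is then mapped by `χ` into itself, so `χ` preserves the line `J ∩ L_α` and acts on it by a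
scalar `c`. The kernel of the centroidal map `χ - c • id` is an ideal containing `J ∩ L_α`, hence
containing `J`; and `c` is unique because `χ e = c • e` for a nonzero `e ∈ J ∩ L_α`.
-/

theorem Submodule.exists_smul_of_mapsTo_of_finrank_eq_one {K V : Type*} [Field K]
    [AddCommGroup V] [Module K V] {W : Submodule K V} (hW : Module.finrank K W = 1)
    {f : Module.End K V} (hf : ∀ v ∈ W, f v ∈ W) : ∃ c : K, ∀ v ∈ W, f v = c • v := by
  obtain ⟨c, hc, -⟩ := (f.restrict hf).existsUnique_eq_smul_id_of_finrank_eq_one hW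
  exact ⟨c, fun v hv => congrArg Subtype.val (LinearMap.congr_fun hc ⟨v, hv⟩)⟩

namespace LieAlgebra

variable {R L : Type*} [CommRing R] [LieRing L] [LieAlgebra R L]

/-- The elements of the centroid `C(L)`. -/
def IsCentroidal (χ : Module.End R L) : Prop :=
  ∀ x y : L, χ ⁅x, y⁆ = ⁅x, χ y⁆

namespace IsCentroidal

variable {χ : Module.End R L}

theorem sub_smul_one (hχ : IsCentroidal χ) (c : R) : IsCentroidal (χ - c • 1) := by
  intro x y
  simp only [LinearMap.sub_apply, LinearMap.smul_apply, Module.End.one_apply, hχ x y, lie_sub,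
    lie_smul]

theorem lie_eq_smul {y x : L} {a : R} (hχ : IsCentroidal χ) (h : ⁅y, x⁆ = a • x) :
    ⁅y, χ x⁆ = a • χ x := by
  rw [← hχ, h, map_smul]

def toLieModuleHom (hχ : IsCentroidal χ) : L →ₗ⁅R, L⁆ L :=
  { χ with map_lie' := hχ _ _ }

theorem eq_zero_of_mem_lieSpan (hχ : IsCentroidal χ) {s : Set L} (hs : ∀ x ∈ s, χ x = 0)
    {x : L} (hx : x ∈ LieSubmodule.lieSpan R L s) : χ x = 0 :=
  (LieSubmodule.lieSpan_le (N := hχ.toLieModuleHom.ker)).mpr hs hx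

end IsCentroidal

end LieAlgebra

open LieAlgebra in
theorem centroid_decomposition_of_toral_general
    (F L : Type*) [Field F] [LieRing L] [LieAlgebra F L]
    (H : LieSubalgebra F L)
    (Lw : Module.Dual F H → Submodule F L)
    (hLw : ∀ (α : Module.Dual F H) (x : L),
      x ∈ Lw α ↔ ∀ h : H, ⁅(h : L), x⁆ = α h • x)
    (J : LieIdeal F L)
    (hJinv : ∀ χ : Module.End F L, (∀ x y : L, χ ⁅x, y⁆ = ⁅x, χ y⁆) →
      ∀ x ∈ J, χ x ∈ J)
    (α : Module.Dual F H)
    (hdim : Module.finrank F ↥((J : Submodule F L) ⊓ Lw α) = 1)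
    (hgen : LieSubmodule.lieSpan F L
      (((J : Submodule F L) ⊓ Lw α : Submodule F L) : Set L) = J)
    (χ : Module.End F L) (hχ : ∀ x y : L, χ ⁅x, y⁆ = ⁅x, χ y⁆) :
    ∃! c : F, ∃ ψ : Module.End F L,
      (∀ x y : L, ψ ⁅x, y⁆ = ⁅x, ψ y⁆) ∧ (∀ x ∈ J, ψ x = 0) ∧
      χ = c • (1 : Module.End F L) + ψ := by
  set V := (J : Submodule F L) ⊓ Lw α
  have hχV : ∀ v ∈ V, χ v ∈ V := fun v hv =>
    ⟨hJinv χ hχ v hv.1, (hLw α _).2 fun h => IsCentroidal.lie_eq_smul hχ ((hLw α v).1 hv.2 h)⟩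
  obtain ⟨c, hc⟩ := Submodule.exists_smul_of_mapsTo_of_finrank_eq_one hdim hχV
  have hψ : IsCentroidal (χ - c • 1) := IsCentroidal.sub_smul_one hχ c
  refine ⟨c, ⟨χ - c • 1, hψ, fun x hx => ?_, by abel⟩, ?_⟩
  · refine hψ.eq_zero_of_mem_lieSpan (fun v hv => ?_) (hgen ▸ hx)
    simp [hc v hv]
  · rintro c' ⟨ψ, -, hψJ, rfl⟩
    obtain ⟨e, heV, he⟩ := Submodule.exists_mem_ne_zero_of_ne_bot (p := V) fun h => by
      rw [h, finrank_bot] at hdim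
      exact zero_ne_one hdim
    have hce := hc e heV
    simp only [LinearMap.add_apply, LinearMap.smul_apply, Module.End.one_apply,
      hψJ e heV.1, add_zero] at hce
    exact smul_left_injective F he hce

/-- Let `L` be a Lie algebra with a toral subalgebra `H`, and let `J` be a
centroid-invariant ideal such that for some nonzero weight `α`, the space
`J ∩ L_α` is one-dimensional and generates `J` as an ideal.  Then
`C(L) = F·id ⊕ {ψ ∈ C(L) : ψ(J) = 0}`. -/
theorem centroid_decomposition_of_toral
    (F L : Type*) [Field F] [LieRing L] [LieAlgebra F L]
    (H : LieSubalgebra F L) [DecidableEq (Module.Dual F H)]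
    (Lw : Module.Dual F H → Submodule F L)
    (hLw : ∀ (α : Module.Dual F H) (x : L),
      x ∈ Lw α ↔ ∀ h : H, ⁅(h : L), x⁆ = α h • x)
    (hdecomp : DirectSum.IsInternal Lw)
    (J : LieIdeal F L)
    (hJinv : ∀ χ : Module.End F L, (∀ x y : L, χ ⁅x, y⁆ = ⁅x, χ y⁆) →
      ∀ x ∈ J, χ x ∈ J)
    (α : Module.Dual F H) (hα : α ≠ 0)
    (hdim : Module.finrank F ↥((J : Submodule F L) ⊓ Lw α) = 1)
    (hgen : LieSubmodule.lieSpan F L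
      (((J : Submodule F L) ⊓ Lw α : Submodule F L) : Set L) = J)
    (χ : Module.End F L) (hχ : ∀ x y : L, χ ⁅x, y⁆ = ⁅x, χ y⁆) :
    ∃! c : F, ∃ ψ : Module.End F L,
      (∀ x y : L, ψ ⁅x, y⁆ = ⁅x, ψ y⁆) ∧ (∀ x ∈ J, ψ x = 0) ∧
      χ = c • (1 : Module.End F L) + ψ :=
  centroid_decomposition_of_toral_general F L H Lw hLw J hJinv α hdim hgen χ hχ
end

section
/- Let π: K → L be a central extension of a Lie algebra L with Z(L) = 0, realized as K = L ⊕ C with bracket [x⊕c, y⊕c'] = [x,y] ⊕ σ(x,y) for a 2-cocycle σ: L×L → C. Then Z(K) = C, and a linear endomorphism Ψ of K lies in C(K) if and only if there exist χ ∈ C(L), ψ ∈ Hom_F(L,C), η ∈ End_F(C) with Ψ(x⊕c) = χ(x) ⊕ (ψ(x)+η(c)) and σ(x, χ(y)) = ψ([x,y]) + η(σ(x,y)) for all x,y ∈ L, c ∈ C. -/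
/-- The bracket of the central extension `K = L ⊕ C` determined by a 2-cocycle
`σ : L × L → C`: `[x ⊕ c, y ⊕ c'] = [x,y] ⊕ σ(x,y)`. -/
def extBracket {F L C : Type*} [Field F] [LieRing L] [LieAlgebra F L]
    [AddCommGroup C] [Module F C] (σ : L →ₗ[F] L →ₗ[F] C) :
    L × C → L × C → L × C :=
  fun p q => (⁅p.1, q.1⁆, σ p.1 q.1)

/-- For a central extension `K = L ⊕ C` of a centreless Lie algebra `L` by a
2-cocycle `σ`, the centre of `K` is `C`, and `Ψ ∈ End(K)` is centroidal iff it
is of the form `Ψ(x ⊕ c) = χ(x) ⊕ (ψ(x) + η(c))` with `χ ∈ C(L)` and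
`σ(x, χ(y)) = ψ([x,y]) + η(σ(x,y))`. -/
theorem centroid_of_central_extension
    (F L C : Type*) [Field F] [LieRing L] [LieAlgebra F L]
    [AddCommGroup C] [Module F C]
    (σ : L →ₗ[F] L →ₗ[F] C)
    (halt : ∀ x : L, σ x x = 0)
    (hcocycle : ∀ x y z : L, σ ⁅x, y⁆ z + σ ⁅y, z⁆ x + σ ⁅z, x⁆ y = 0)
    (hZ : ∀ x : L, (∀ y : L, ⁅x, y⁆ = 0) → x = 0) :
    -- Z(K) = C
    (∀ p : L × C, (∀ q : L × C, extBracket σ p q = 0) ↔ p.1 = 0) ∧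
    -- description of the centroid of K
    (∀ Ψ : (L × C) →ₗ[F] (L × C),
      (∀ p q : L × C, Ψ (extBracket σ p q) = extBracket σ p (Ψ q)) ↔
      ∃ (χ : L →ₗ[F] L) (ψ : L →ₗ[F] C) (η : C →ₗ[F] C),
        (∀ x y : L, χ ⁅x, y⁆ = ⁅x, χ y⁆) ∧
        (∀ (x : L) (c : C), Ψ (x, c) = (χ x, ψ x + η c)) ∧
        (∀ x y : L, σ x (χ y) = ψ ⁅x, y⁆ + η (σ x y))) := by
  constructor
  · intro p
    constructor
    · intro h
      apply hZ
      intro y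
      have h1 := congrArg Prod.fst (h (y, 0))
      simpa [extBracket] using h1
    · intro h q
      simp [extBracket, h, Prod.ext_iff]
  · intro Ψ
    constructor
    · intro hΨ
      set χ : L →ₗ[F] L := (LinearMap.fst F L C).comp (Ψ.comp (LinearMap.inl F L C)) with hχdef
      set ψ : L →ₗ[F] C := (LinearMap.snd F L C).comp (Ψ.comp (LinearMap.inl F L C)) with hψdef
      set η : C →ₗ[F] C := (LinearMap.snd F L C).comp (Ψ.comp (LinearMap.inr F L C)) with hηdef
      have hker : ∀ c : C, (Ψ (0, c)).1 = 0 := by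
        intro c
        have key : ∀ y : L, ⁅y, (Ψ (0, c)).1⁆ = 0 := by
          intro y
          have h1 := hΨ (y, 0) (0, c)
          have h2 : extBracket σ (y, 0) (0, c) = 0 := by simp [extBracket]
          rw [h2, map_zero] at h1
          have := congrArg Prod.fst h1
          simpa [extBracket] using this.symm
        apply hZ
        intro y
        rw [← neg_eq_zero, ← lie_skew, key y]; simp
      have hform : ∀ (x : L) (c : C), Ψ (x, c) = (χ x, ψ x + η c) := by
        intro x c
        have hsplit : (x, c) = ((x, 0) : L × C) + (0, c) := by simp
        rw [hsplit, map_add]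
        have h0 : Ψ (0, c) = (0, η c) := by
          rw [hηdef]
          simp only [LinearMap.comp_apply, LinearMap.inr_apply, LinearMap.snd_apply]
          exact Prod.ext (hker c) rfl
        have h1 : Ψ (x, (0 : C)) = (χ x, ψ x) := by
          rw [hχdef, hψdef]
          rfl
        rw [h0, h1]
        simp [Prod.ext_iff]
      refine ⟨χ, ψ, η, ?_, hform, ?_⟩
      · intro x y
        have h1 := hΨ (x, 0) (y, 0)
        have h2 : extBracket σ (x, 0) (y, 0) = (⁅x, y⁆, σ x y) := rfl
        rw [h2, hform] at h1
        have := congrArg Prod.fst h1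
        simpa [extBracket, hform] using this
      · intro x y
        have h1 := hΨ (x, 0) (y, 0)
        have h2 : extBracket σ (x, 0) (y, 0) = (⁅x, y⁆, σ x y) := rfl
        rw [h2, hform] at h1
        have := congrArg Prod.snd h1
        simpa [extBracket, hform] using this.symm
    · rintro ⟨χ, ψ, η, hχ, hform, hσ⟩ p q
      have h1 : Ψ (extBracket σ p q) = (χ ⁅p.1, q.1⁆, ψ ⁅p.1, q.1⁆ + η (σ p.1 q.1)) :=
        hform _ _
      rw [h1]
      have h2 : Ψ q = (χ q.1, ψ q.1 + η q.2) := by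
        have := hform q.1 q.2
        simpa using this
      simp [extBracket, h2, hχ, hσ]
end
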